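/- Let Z^* be a (0,1)-valued random variable with density f on (0,1), let W be a [0,1)-valued random variable with P(W=0) = p₀ and with density f_W on (0,1), and let V be uniform on (0,1), with Z^*, W, V independent. Then the random variable L = Z^*(1−W) + WV has density f_L(u) = p₀ f(u) + ∫_0^u [ ∫_{1−(1−u)/(1−z)}^1 ξ^{−1} f_W(ξ) dξ ] f(z) dz + ∫_u^1 [ ∫_{1−u/z}^1 ξ^{−1} f_W(ξ) dξ ] f(z) dz for u ∈ (0,1). -/

import Mathlib

/-!
Write `L = mix ((Z*, W), V)` with `mix ((z, w), v) = z (1 - w) + w v`. Split the law of `W` into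
its atom `p₀ δ₀` and its absolutely continuous part. Since `mix ((z, 0), v) = z`, the atom
contributes `p₀ • law Z*`. For fixed `z` and `ξ ∈ (0, 1)`, the affine map `v ↦ z (1 - ξ) + ξ v`
carries the uniform law on `(0, 1)` to the uniform law on `(z (1 - ξ), z (1 - ξ) + ξ)`, of density
`ξ⁻¹`; by Tonelli the rest of the law of `L` has the density obtained by integrating these slice
densities against `f(z) f_W(ξ)`. For `u ∈ (0, 1)` the slice condition
`u ∈ (z (1 - ξ), z (1 - ξ) + ξ)` reads `ξ > 1 - (1 - u) / (1 - z)` if `z < u` and `ξ > 1 - u / z`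
if `z > u`. As `L` has total mass one, this density is finite almost everywhere, which is what
allows passing to the real-valued integrals of the statement.
-/

open MeasureTheory Set
open scoped ENNReal

theorem map_prod_eq_withDensity_of_ae {α β γ : Type*} [MeasurableSpace α] [MeasurableSpace β]
    [MeasurableSpace γ] {μ : Measure α} {ν : Measure β} {ρ : Measure γ}
    [SFinite μ] [SFinite ν] [SFinite ρ] {T : α × β → γ} (hT : Measurable T)
    {k : α → γ → ℝ≥0∞} (hk : Measurable (Function.uncurry k))
    (h : ∀ᵐ x ∂μ, ν.map (fun y => T (x, y)) = ρ.withDensity (k x)) :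
    (μ.prod ν).map T = ρ.withDensity fun u => ∫⁻ x, k x u ∂μ := by
  ext s hs
  rw [Measure.map_apply hT hs, Measure.prod_apply (hT hs), withDensity_apply _ hs]
  calc ∫⁻ x, ν (Prod.mk x ⁻¹' (T ⁻¹' s)) ∂μ = ∫⁻ x, ∫⁻ u in s, k x u ∂ρ ∂μ := by
        refine lintegral_congr_ae (h.mono fun x hx => ?_)
        dsimp only
        rw [← withDensity_apply _ hs, ← hx,
          Measure.map_apply (f := fun y => T (x, y)) (hT.comp measurable_prodMk_left) hs]
        rfl
    _ = ∫⁻ u in s, ∫⁻ x, k x u ∂μ ∂ρ := lintegral_lintegral_swap hk.aemeasurable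

theorem map_affine_volume_Ioo (c : ℝ) {ξ : ℝ} (hξ : 0 < ξ) :
    (volume.restrict (Ioo (0:ℝ) 1)).map (fun v => c + ξ * v)
      = ENNReal.ofReal ξ⁻¹ • volume.restrict (Ioo c (c + ξ)) := by
  have hg : Measurable fun v : ℝ => c + ξ * v := by fun_prop
  ext s hs
  have hpre : (fun v => c + ξ * v) ⁻¹' s ∩ Ioo 0 1
      = (fun v => ξ * v) ⁻¹' ((fun x => c + x) ⁻¹' (s ∩ Ioo c (c + ξ))) := by
    ext v
    simp only [mem_inter_iff, mem_preimage, mem_Ioo]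
    constructor
    · rintro ⟨h1, h2, h3⟩; exact ⟨h1, by nlinarith, by nlinarith⟩
    · rintro ⟨h1, h2, h3⟩; exact ⟨h1, by nlinarith, by nlinarith⟩
  rw [Measure.map_apply hg hs, Measure.restrict_apply (hg hs), hpre,
    Real.volume_preimage_mul_left hξ.ne', measure_preimage_add, abs_of_pos (inv_pos.2 hξ),
    Measure.smul_apply, Measure.restrict_apply hs, smul_eq_mul]

theorem setLIntegral_Ioo_split {μ : Measure ℝ} [NullSingletonClass μ] {a b c : ℝ} (hab : a ≤ b)
    (hbc : b < c) (g : ℝ → ℝ≥0∞) :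
    ∫⁻ x in Ioo a c, g x ∂μ = ∫⁻ x in Ioo a b, g x ∂μ + ∫⁻ x in Ioo b c, g x ∂μ := by
  rw [← Ioc_union_Ioo_eq_Ioo hab hbc, lintegral_union measurableSet_Ioo
    (disjoint_left.2 fun x hx hx' => (not_lt.2 hx.2) hx'.1), setLIntegral_congr Ioo_ae_eq_Ioc.symm]

theorem measurable_setIntegral_Ioo {g : ℝ → ℝ} (hg : Measurable g) {a b : ℝ → ℝ}
    (ha : Measurable a) (hb : Measurable b) :
    Measurable fun z => ∫ ξ in Ioo (a z) (b z), g ξ := by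
  have hQ : MeasurableSet {q : ℝ × ℝ | a q.1 < q.2 ∧ q.2 < b q.1} :=
    (measurableSet_lt (ha.comp measurable_fst) measurable_snd).inter
      (measurableSet_lt measurable_snd (hb.comp measurable_fst))
  have hjoint : StronglyMeasurable fun q : ℝ × ℝ => (Ioo (a q.1) (b q.1)).indicator g q.2 :=
    ((hg.comp measurable_snd).indicator hQ).stronglyMeasurable
  simpa only [integral_indicator measurableSet_Ioo] using hjoint.integral_prod_right'.measurable

theorem lintegral_ne_top_of_eq_add_withDensity {α : Type*} [MeasurableSpace α]
    {μ ν ρ : Measure α} [IsFiniteMeasure ρ] {g : α → ℝ≥0∞} (h : ρ = μ + ν.withDensity g) :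
    ∫⁻ x, g x ∂ν ≠ ∞ := by
  have hρ := measure_ne_top ρ univ
  rw [h, Measure.add_apply, withDensity_apply _ MeasurableSet.univ, Measure.restrict_univ] at hρ
  exact (ENNReal.add_ne_top.1 hρ).2

theorem ProbabilityTheory.iIndepFun.map_prodMk_prodMk {Ω β : Type*} [MeasurableSpace Ω]
    [MeasurableSpace β] {μ : Measure Ω} [IsProbabilityMeasure μ] {X Y Z : Ω → β}
    (hX : Measurable X) (hY : Measurable Y) (hZ : Measurable Z) (h : iIndepFun ![X, Y, Z] μ) :
    μ.map (fun ω => ((X ω, Y ω), Z ω)) = ((μ.map X).prod (μ.map Y)).prod (μ.map Z) := by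
  have hm : ∀ i, Measurable (![X, Y, Z] i) := fun i => by fin_cases i <;> assumption
  have hXY : IndepFun X Y μ := by simpa using h.indepFun (show (0 : Fin 3) ≠ 1 by decide)
  have hXYZ : IndepFun (fun ω => (X ω, Y ω)) Z μ := by
    simpa using h.indepFun_prodMk hm 0 1 2 (by decide) (by decide)
  rw [(indepFun_iff_map_prod_eq_prod_map_map (hX.prodMk hY).aemeasurable hZ.aemeasurable).1 hXYZ,
    (indepFun_iff_map_prod_eq_prod_map_map hX.aemeasurable hY.aemeasurable).1 hXY]

theorem ae_mem_Ioo_prod_withDensity (F G : ℝ → ℝ≥0∞) :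
    ∀ᵐ p ∂(((volume.restrict (Ioo (0:ℝ) 1)).withDensity F).prod
      ((volume.restrict (Ioo (0:ℝ) 1)).withDensity G)), p ∈ Ioo (0:ℝ) 1 ×ˢ Ioo (0:ℝ) 1 := by
  refine ((withDensity_absolutelyContinuous _ _).prod
    (withDensity_absolutelyContinuous _ _)).ae_le ?_
  rw [Measure.prod_restrict]
  exact ae_restrict_mem (measurableSet_Ioo.prod measurableSet_Ioo)

theorem setLIntegral_inv_mul_ofReal {g : ℝ → ℝ} (hg : IntegrableOn g (Ioo 0 1))
    (hg0 : ∀ x, 0 ≤ g x) {a : ℝ} (ha : 0 < a) :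
    ∫⁻ ξ in Ioo a 1, ENNReal.ofReal ξ⁻¹ * ENNReal.ofReal (g ξ)
      = ENNReal.ofReal (∫ ξ in Ioo a 1, ξ⁻¹ * g ξ) := by
  have hinv0 : ∀ ξ ∈ Ioo a 1, 0 ≤ ξ⁻¹ := fun ξ hξ => inv_nonneg.2 (ha.trans hξ.1).le
  have hint : IntegrableOn (fun ξ => ξ⁻¹ * g ξ) (Ioo a 1) :=
    (hg.mono_set (Ioo_subset_Ioo_left ha.le)).bdd_mul (c := a⁻¹)
      measurable_inv.aestronglyMeasurable
      ((ae_restrict_iff' measurableSet_Ioo).2 (ae_of_all _ fun ξ hξ => by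
        rw [Real.norm_eq_abs, abs_of_nonneg (hinv0 ξ hξ)]
        exact inv_anti₀ ha hξ.1.le))
  rw [ofReal_integral_eq_lintegral_ofReal hint ((ae_restrict_iff' measurableSet_Ioo).2
    (ae_of_all _ fun ξ hξ => mul_nonneg (hinv0 ξ hξ) (hg0 ξ)))]
  exact setLIntegral_congr_fun measurableSet_Ioo fun ξ hξ => (ENNReal.ofReal_mul (hinv0 ξ hξ)).symm

theorem setIntegral_mul_eq_toReal_lintegral {f g : ℝ → ℝ} (hf : Measurable f) (hg : Measurable g)
    (hf0 : ∀ x, 0 ≤ f x) (hg0 : ∀ x, 0 ≤ g x) (hgi : IntegrableOn g (Ioo 0 1))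
    {a : ℝ → ℝ} (ha : Measurable a) {s : Set ℝ} (hs : MeasurableSet s)
    (hapos : ∀ z ∈ s, 0 < a z) :
    ∫ z in s, (∫ ξ in Ioo (a z) 1, ξ⁻¹ * g ξ) * f z
      = (∫⁻ z in s, (∫⁻ ξ in Ioo (a z) 1, ENNReal.ofReal ξ⁻¹ * ENNReal.ofReal (g ξ))
          * ENNReal.ofReal (f z)).toReal := by
  have hG0 : ∀ z ∈ s, 0 ≤ ∫ ξ in Ioo (a z) 1, ξ⁻¹ * g ξ := fun z hz =>
    setIntegral_nonneg measurableSet_Ioo fun ξ hξ =>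
      mul_nonneg (inv_nonneg.2 ((hapos z hz).trans hξ.1).le) (hg0 ξ)
  rw [integral_eq_lintegral_of_nonneg_ae ((ae_restrict_iff' hs).2
      (ae_of_all _ fun z hz => mul_nonneg (hG0 z hz) (hf0 z)))
    ((measurable_setIntegral_Ioo (by fun_prop) ha measurable_const).mul hf).aestronglyMeasurable]
  congr 1
  refine setLIntegral_congr_fun hs fun z hz => ?_
  rw [ENNReal.ofReal_mul (hG0 z hz), setLIntegral_inv_mul_ofReal hgi hg0 (hapos z hz)]

noncomputable def mix (p : (ℝ × ℝ) × ℝ) : ℝ := p.1.1 * (1 - p.1.2) + p.1.2 * p.2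

noncomputable def mixKernel (p : ℝ × ℝ) : ℝ → ℝ≥0∞ :=
  (Ioo (p.1 * (1 - p.2)) (p.1 * (1 - p.2) + p.2)).indicator fun _ => ENNReal.ofReal p.2⁻¹

theorem measurable_mix : Measurable mix := by
  unfold mix; fun_prop

theorem measurable_uncurry_mixKernel : Measurable (Function.uncurry mixKernel) := by
  have hQ : MeasurableSet {q : (ℝ × ℝ) × ℝ |
      q.1.1 * (1 - q.1.2) < q.2 ∧ q.2 < q.1.1 * (1 - q.1.2) + q.1.2} :=
    (measurableSet_lt (by fun_prop) measurable_snd).inter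
      (measurableSet_lt measurable_snd (by fun_prop))
  exact Measurable.indicator (f := fun q : (ℝ × ℝ) × ℝ => ENNReal.ofReal q.1.2⁻¹) (by fun_prop) hQ

theorem map_mix_prod_dirac_zero (μ : Measure ℝ) [SFinite μ] (ν : Measure ℝ)
    [IsProbabilityMeasure ν] : ((μ.prod (Measure.dirac 0)).prod ν).map mix = μ := by
  rw [Measure.prod_dirac, ← Measure.map_id (μ := ν),
    Measure.map_prod_map _ _ (by fun_prop) measurable_id,
    Measure.map_map measurable_mix (by fun_prop)]
  have : mix ∘ Prod.map (fun x => (x, (0:ℝ))) id = Prod.fst := by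
    funext p; simp [mix]
  rw [this, Measure.map_fst_prod, measure_univ, one_smul]

theorem map_mix_prod_smul_dirac_add (c : ℝ≥0∞) (μ ν ρ : Measure ℝ) [SFinite μ] [SFinite ν]
    [IsProbabilityMeasure ρ] :
    ((μ.prod (c • Measure.dirac 0 + ν)).prod ρ).map mix = c • μ + ((μ.prod ν).prod ρ).map mix := by
  rw [Measure.prod_add, Measure.prod_smul_right, Measure.add_prod, Measure.prod_smul_left,
    Measure.map_add _ _ measurable_mix, Measure.map_smul, map_mix_prod_dirac_zero]

theorem map_mix_eq_withDensity {μ : Measure (ℝ × ℝ)} [SFinite μ]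
    (hμ : ∀ᵐ p ∂μ, p ∈ Ioo (0:ℝ) 1 ×ˢ Ioo (0:ℝ) 1) :
    (μ.prod (volume.restrict (Ioo 0 1))).map mix
      = (volume.restrict (Ioo 0 1)).withDensity fun u => ∫⁻ p, mixKernel p u ∂μ := by
  refine map_prod_eq_withDensity_of_ae measurable_mix measurable_uncurry_mixKernel
    (hμ.mono fun p ⟨⟨hz0, hz1⟩, hξ0, hξ1⟩ => ?_)
  have hsub : Ioo (p.1 * (1 - p.2)) (p.1 * (1 - p.2) + p.2) ⊆ Ioo 0 1 :=
    Ioo_subset_Ioo (by nlinarith) (by nlinarith)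
  rw [mixKernel, withDensity_indicator measurableSet_Ioo,
    Measure.restrict_restrict measurableSet_Ioo, inter_eq_left.2 hsub, withDensity_const,
    ← map_affine_volume_Ioo _ hξ0]
  rfl

theorem one_sub_div_one_sub_pos {u z : ℝ} (hzu : z < u) (hu : u < 1) :
    0 < 1 - (1 - u) / (1 - z) :=
  sub_pos.2 ((div_lt_one (by linarith)).2 (by linarith))

theorem one_sub_div_pos {u z : ℝ} (hu : 0 < u) (huz : u < z) : 0 < 1 - u / z :=
  sub_pos.2 ((div_lt_one (hu.trans huz)).2 huz)

theorem mem_Ioo_mix_iff_of_lt {u z ξ : ℝ} (hz : 0 ≤ z) (hzu : z < u) (hu : u < 1) (hξ : 0 ≤ ξ) :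
    u ∈ Ioo (z * (1 - ξ)) (z * (1 - ξ) + ξ) ↔ 1 - (1 - u) / (1 - z) < ξ := by
  rw [sub_lt_comm, lt_div_iff₀ (by linarith), mem_Ioo]
  constructor
  · rintro ⟨-, h⟩; linarith
  · intro h; exact ⟨by nlinarith, by linarith⟩

theorem mem_Ioo_mix_iff_of_gt {u z ξ : ℝ} (hu : 0 ≤ u) (huz : u < z) (hz : z ≤ 1) (hξ : 0 ≤ ξ) :
    u ∈ Ioo (z * (1 - ξ)) (z * (1 - ξ) + ξ) ↔ 1 - u / z < ξ := by
  have hz0 : 0 < z := by linarith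
  rw [sub_lt_comm, lt_div_iff₀ hz0, mem_Ioo]
  constructor
  · rintro ⟨h, -⟩; linarith
  · intro h; exact ⟨by linarith, by nlinarith⟩

theorem setLIntegral_mixKernel_mul {u z a : ℝ} (ha : 0 ≤ a) (G : ℝ → ℝ≥0∞)
    (h : ∀ ξ ∈ Ioo (0:ℝ) 1, u ∈ Ioo (z * (1 - ξ)) (z * (1 - ξ) + ξ) ↔ a < ξ) :
    ∫⁻ ξ in Ioo 0 1, mixKernel (z, ξ) u * G ξ = ∫⁻ ξ in Ioo a 1, ENNReal.ofReal ξ⁻¹ * G ξ := by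
  have hIoo : Ioi a ∩ Ioo 0 1 = Ioo a 1 := by
    ext ξ
    simp only [mem_inter_iff, mem_Ioi, mem_Ioo]
    constructor
    · rintro ⟨h1, -, h2⟩; exact ⟨h1, h2⟩
    · rintro ⟨h1, h2⟩; exact ⟨h1, by linarith, h2⟩
  rw [← hIoo, ← Measure.restrict_restrict measurableSet_Ioi,
    ← lintegral_indicator measurableSet_Ioi]
  refine setLIntegral_congr_fun measurableSet_Ioo fun ξ hξ => ?_
  by_cases hξa : a < ξ
  · rw [mixKernel, indicator_of_mem ((h ξ hξ).2 hξa), indicator_of_mem (mem_Ioi.2 hξa)]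
  · rw [mixKernel, indicator_of_notMem (mt (h ξ hξ).1 hξa),
      indicator_of_notMem (mt mem_Ioi.1 hξa), zero_mul]

theorem lintegral_mixKernel_prod_withDensity {F G : ℝ → ℝ≥0∞} (hF : Measurable F)
    (hG : Measurable G) {u : ℝ} (hu : u ∈ Ioo (0:ℝ) 1) :
    ∫⁻ p, mixKernel p u ∂(((volume.restrict (Ioo 0 1)).withDensity F).prod
        ((volume.restrict (Ioo 0 1)).withDensity G))
      = (∫⁻ z in Ioo 0 u, (∫⁻ ξ in Ioo (1 - (1 - u) / (1 - z)) 1,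
            ENNReal.ofReal ξ⁻¹ * G ξ) * F z)
        + ∫⁻ z in Ioo u 1, (∫⁻ ξ in Ioo (1 - u / z) 1, ENNReal.ofReal ξ⁻¹ * G ξ) * F z := by
  obtain ⟨hu0, hu1⟩ := hu
  have hk : Measurable fun p => mixKernel p u :=
    measurable_uncurry_mixKernel.comp (measurable_id.prodMk measurable_const)
  have hslice : ∀ z, ∫⁻ ξ in Ioo 0 1, F z * G ξ * mixKernel (z, ξ) u
      = (∫⁻ ξ in Ioo 0 1, mixKernel (z, ξ) u * G ξ) * F z := fun z => by
    have hmeas : Measurable fun ξ => mixKernel (z, ξ) u * G ξ :=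
      (hk.comp measurable_prodMk_left).mul hG
    rw [← lintegral_mul_const _ hmeas]
    exact lintegral_congr fun ξ => by ring
  rw [prod_withDensity hF hG, lintegral_withDensity_eq_lintegral_mul _ (by fun_prop) hk,
    lintegral_prod _ (by fun_prop : Measurable _).aemeasurable]
  simp only [Pi.mul_apply, hslice]
  rw [setLIntegral_Ioo_split hu0.le hu1]
  congr 1
  · refine setLIntegral_congr_fun measurableSet_Ioo fun z ⟨hz0, hzu⟩ => ?_
    rw [setLIntegral_mixKernel_mul (one_sub_div_one_sub_pos hzu hu1).le G
      fun ξ hξ => mem_Ioo_mix_iff_of_lt hz0.le hzu hu1 hξ.1.le]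
  · refine setLIntegral_congr_fun measurableSet_Ioo fun z ⟨huz, hz1⟩ => ?_
    rw [setLIntegral_mixKernel_mul (one_sub_div_pos hu0 huz).le G
      fun ξ hξ => mem_Ioo_mix_iff_of_gt hu0.le huz hz1.le hξ.1.le]

theorem toReal_lintegral_mixKernel {f g : ℝ → ℝ} (hf : Measurable f) (hg : Measurable g)
    (hf0 : ∀ x, 0 ≤ f x) (hg0 : ∀ x, 0 ≤ g x) (hgi : IntegrableOn g (Ioo 0 1))
    {u : ℝ} (hu : u ∈ Ioo (0:ℝ) 1)
    (hfin : ∫⁻ p, mixKernel p u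
      ∂(((volume.restrict (Ioo 0 1)).withDensity fun z => ENNReal.ofReal (f z)).prod
        ((volume.restrict (Ioo 0 1)).withDensity fun ξ => ENNReal.ofReal (g ξ))) ≠ ∞) :
    (∫⁻ p, mixKernel p u
      ∂(((volume.restrict (Ioo 0 1)).withDensity fun z => ENNReal.ofReal (f z)).prod
        ((volume.restrict (Ioo 0 1)).withDensity fun ξ => ENNReal.ofReal (g ξ)))).toReal
      = (∫ z in Ioo 0 u, (∫ ξ in Ioo (1 - (1 - u) / (1 - z)) 1, ξ⁻¹ * g ξ) * f z)
        + ∫ z in Ioo u 1, (∫ ξ in Ioo (1 - u / z) 1, ξ⁻¹ * g ξ) * f z := by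
  obtain ⟨hu0, hu1⟩ := hu
  rw [lintegral_mixKernel_prod_withDensity hf.ennreal_ofReal hg.ennreal_ofReal ⟨hu0, hu1⟩]
    at hfin ⊢
  rw [ENNReal.toReal_add (ENNReal.add_ne_top.1 hfin).1 (ENNReal.add_ne_top.1 hfin).2,
    setIntegral_mul_eq_toReal_lintegral hf hg hf0 hg0 hgi (by fun_prop) measurableSet_Ioo
      fun z hz => one_sub_div_one_sub_pos hz.2 hu1,
    setIntegral_mul_eq_toReal_lintegral hf hg hf0 hg0 hgi (by fun_prop) measurableSet_Ioo
      fun z hz => one_sub_div_pos hu0 hz.1]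

theorem stmt13 {Ω : Type*} [MeasurableSpace Ω] (ℙ : Measure Ω) [IsProbabilityMeasure ℙ]
    (Zs W V : Ω → ℝ)
    (hZsm : Measurable Zs) (hWm : Measurable W) (hVm : Measurable V)
    (f fW : ℝ → ℝ) (hf : Measurable f) (hfW : Measurable fW)
    (hfnn : ∀ x, 0 ≤ f x) (hfWnn : ∀ x, 0 ≤ fW x)
    (p₀ : ℝ) (hp₀ : 0 ≤ p₀)
    (hZs : Measure.map Zs ℙ =
      (volume.restrict (Set.Ioo (0:ℝ) 1)).withDensity (fun z => ENNReal.ofReal (f z)))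
    (hW : Measure.map W ℙ =
      ENNReal.ofReal p₀ • Measure.dirac (0:ℝ) +
      (volume.restrict (Set.Ioo (0:ℝ) 1)).withDensity (fun w => ENNReal.ofReal (fW w)))
    (hV : Measure.map V ℙ = volume.restrict (Set.Ioo (0:ℝ) 1))
    (hInd : ProbabilityTheory.iIndepFun ![Zs, W, V] ℙ) :
    Measure.map (fun ω => Zs ω * (1 - W ω) + W ω * V ω) ℙ
      = (volume.restrict (Set.Ioo (0:ℝ) 1)).withDensity (fun u => ENNReal.ofReal (
          p₀ * f u
          + (∫ z in Set.Ioo (0:ℝ) u,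
              (∫ ξ in Set.Ioo (1 - (1 - u) / (1 - z)) 1, ξ⁻¹ * fW ξ) * f z)
          + ∫ z in Set.Ioo u 1,
              (∫ ξ in Set.Ioo (1 - u / z) 1, ξ⁻¹ * fW ξ) * f z)) := by
  set μZ := (volume.restrict (Ioo (0:ℝ) 1)).withDensity fun z => ENNReal.ofReal (f z)
  set νW := (volume.restrict (Ioo (0:ℝ) 1)).withDensity fun w => ENNReal.ofReal (fW w)
  have : IsProbabilityMeasure (volume.restrict (Ioo (0:ℝ) 1)) :=
    hV ▸ Measure.isProbabilityMeasure_map hVm.aemeasurable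
  have hL : Measurable fun ω => Zs ω * (1 - W ω) + W ω * V ω := by fun_prop
  have hlaw : ℙ.map (fun ω => Zs ω * (1 - W ω) + W ω * V ω) = ENNReal.ofReal p₀ • μZ
      + (volume.restrict (Ioo 0 1)).withDensity fun u => ∫⁻ p, mixKernel p u ∂(μZ.prod νW) := by
    rw [show (fun ω => Zs ω * (1 - W ω) + W ω * V ω) = mix ∘ fun ω => ((Zs ω, W ω), V ω) from rfl,
      ← Measure.map_map measurable_mix (by fun_prop), hInd.map_prodMk_prodMk hZsm hWm hVm,
      hZs, hW, hV, map_mix_prod_smul_dirac_add,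
      map_mix_eq_withDensity (ae_mem_Ioo_prod_withDensity _ _)]
  have hfWi : IntegrableOn fW (Ioo 0 1) := by
    have := Measure.isProbabilityMeasure_map (μ := ℙ) hWm.aemeasurable
    exact (lintegral_ofReal_ne_top_iff_integrable hfW.aestronglyMeasurable
      (ae_of_all _ hfWnn)).1 (lintegral_ne_top_of_eq_add_withDensity hW)
  have hfin : ∀ᵐ u ∂(volume.restrict (Ioo 0 1)), ∫⁻ p, mixKernel p u ∂(μZ.prod νW) < ∞ := by
    have := Measure.isProbabilityMeasure_map (μ := ℙ) hL.aemeasurable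
    exact ae_lt_top measurable_uncurry_mixKernel.lintegral_prod_left'
      (lintegral_ne_top_of_eq_add_withDensity hlaw)
  rw [hlaw, ← withDensity_smul' _ _ ENNReal.ofReal_ne_top,
    ← withDensity_add_left (hf.ennreal_ofReal.const_smul _)]
  refine withDensity_congr_ae ?_
  filter_upwards [hfin, ae_restrict_mem measurableSet_Ioo] with u hu_fin hu
  rw [Pi.add_apply, Pi.smul_apply, smul_eq_mul, add_assoc,
    ← toReal_lintegral_mixKernel hf hfW hfnn hfWnn hfWi hu hu_fin.ne,
    ENNReal.ofReal_add (mul_nonneg hp₀ (hfnn u)) ENNReal.toReal_nonneg,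
    ENNReal.ofReal_toReal hu_fin.ne, ENNReal.ofReal_mul hp₀]
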